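/- arXiv:2012.07013 — 2 statements merged into one kernel-verified Lean document; each statement's English description precedes it below -/
import Mathlib

section
/- Let u ∈ C²(Ω) ∩ Lip(Ω, M), fix A > 0 and I = [0, A], and run exact-linesearch gradient descent x^{k+1} = x^k − α^k ∇u(x^k) with α^k = argmin_{α∈I} u(x^k − α∇u(x^k)), and nonlocal exact-linesearch gradient descent x^{k+1,n} = x^{k,n} − α^{k,n} ∇_n u(x^{k,n}) with α^{k,n} = argmin_{α∈I} u(x^{k,n} − α∇_n u(x^{k,n})), both from the same initial point x^0 = x^{0,n} for all n, where all iterates remain in Ω (in fact in a compact subset of Ω) and each linesearch minimizer α^{k,n} and α^k is assumed unique. Then for each k there exists a subsequence {α^{k,n_{m₁}(k)}} of {α^{k,n}} with α^{k,n_{m₁}(k)} → α^k, and a subsequence {x^{k,n_{m₂}(k)}} of {x^{k,n}} with x^{k,n_{m₂}(k)} → x^k, as the subsequence indices tend to infinity. -/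
open MeasureTheory Filter Topology Metric

noncomputable section

abbrev Euc (D : ℕ) := EuclideanSpace ℝ (Fin D)

/-- The standing hypotheses on the sequence of radial kernels `ρ n`. -/
structure IsKernelSeq (D : ℕ) (ρ : ℕ → Euc D → ℝ) : Prop where
  nonneg : ∀ n x, 0 ≤ ρ n x
  radial : ∀ n x y, ‖x‖ = ‖y‖ → ρ n x = ρ n y
  integral_one : ∀ n, ∫ x, ρ n x = 1
  tail : ∀ δ : ℝ, 0 < δ →
    Tendsto (fun n => ∫ x in {x : Euc D | δ < ‖x‖}, ρ n x) atTop (nhds 0)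

/-- A bounded, connected, simply connected open domain. -/
structure NiceDomain (D : ℕ) (Ω : Set (Euc D)) : Prop where
  isOpen : IsOpen Ω
  bounded : Bornology.IsBounded Ω
  connected : IsConnected Ω
  simplyConnected : SimplyConnectedSpace Ω

/-- The nonlocal gradient of `u` over the set `Ω` with kernel `ρ`. -/
def nlGrad (D : ℕ) (Ω : Set (Euc D)) (ρ : Euc D → ℝ) (u : Euc D → ℝ) (x : Euc D) : Euc D :=
  (D : ℝ) • ∫ y in Ω, (((u x - u y) / ‖x - y‖ ^ 2) * ρ (x - y)) • (x - y)

/-- `a` is the unique minimizer over `I = [0, A]` of `α ↦ u (z - α • d)`. -/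
def IsUniqueLinesearchMin (D : ℕ) (u : Euc D → ℝ) (A : ℝ) (z d : Euc D) (a : ℝ) : Prop :=
  a ∈ Set.Icc 0 A ∧ (∀ b ∈ Set.Icc 0 A, u (z - a • d) ≤ u (z - b • d)) ∧
    ∀ b ∈ Set.Icc 0 A, u (z - b • d) = u (z - a • d) → b = a

/-!
Split the nonlocal gradient at a small radius `δ`. On `|w| < δ` the difference quotient
`u x - u (x - w)` is `⟪∇u x, w⟫` up to `ε |w|`, and for a radial kernel
`D ∫_{|w|<δ} ⟪v, w⟫ w / |w|² ρ(w) dw = (∫_{|w|<δ} ρ) v` (the second-moment matrix of a radial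
weight is scalar). On `|w| ≥ δ` the Lipschitz bound leaves a term of size `M ∫_{|w|≥δ} ρ`, which
tends to `0`. Uniformly on the compact set `V` this gives `∇_n u(z_n) → ∇u(z)` whenever `z_n → z`.

Then induct on `k`. If `x^{k,n} → x^k` along a subsequence, the directions converge to `∇u(x^k)`;
the stepsizes lie in the compact `[0, A]`, and any limit point of them minimizes
`α ↦ u(x^k - α ∇u(x^k))` by passing to the limit in the minimality inequalities, so it equals
`α^k` by uniqueness. Along that subsequence `x^{k+1,n} → x^{k+1}`.
-/

lemma norm_div_norm_sq_mul_smul_le {E : Type*} [NormedAddCommGroup E] [NormedSpace ℝ E]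
    {c t K : ℝ} {w : E} (hK : 0 ≤ K) (hc : |c| ≤ K * ‖w‖) :
    ‖((c / ‖w‖ ^ 2) * t) • w‖ ≤ K * |t| := by
  rcases eq_or_ne w 0 with rfl | hw
  · simpa using mul_nonneg hK (abs_nonneg t)
  have hw : 0 < ‖w‖ := norm_pos_iff.2 hw
  calc ‖((c / ‖w‖ ^ 2) * t) • w‖ = |c| / ‖w‖ * |t| := by
        rw [norm_smul, Real.norm_eq_abs, abs_mul, abs_div, abs_of_pos (by positivity : 0 < ‖w‖ ^ 2)]
        field_simp
    _ ≤ K * |t| := by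
        gcongr
        exact (div_le_iff₀ hw).2 hc

lemma integrableOn_div_norm_sq_mul_smul {D : ℕ} {s : Set (Euc D)} {c f : Euc D → ℝ} {K : ℝ}
    (hK : 0 ≤ K) (hs : MeasurableSet s) (hc : AEStronglyMeasurable c (volume.restrict s))
    (hcK : ∀ w ∈ s, |c w| ≤ K * ‖w‖) (hf : IntegrableOn f s) :
    IntegrableOn (fun w => ((c w / ‖w‖ ^ 2) * f w) • w) s := by
  refine Integrable.mono' (hf.norm.const_mul K) ?_ ((ae_restrict_iff' hs).2 (ae_of_all _
    fun w hw => norm_div_norm_sq_mul_smul_le hK (hcK w hw)))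
  exact ((hc.div₀ (continuous_norm.pow 2).aestronglyMeasurable).mul
    hf.aestronglyMeasurable).smul aestronglyMeasurable_id

lemma norm_setIntegral_le_mul_setIntegral {α E : Type*} [MeasurableSpace α] {μ : Measure α}
    [NormedAddCommGroup E] [NormedSpace ℝ E] {s : Set α} {F : α → E} {f : α → ℝ} {K : ℝ}
    (hs : MeasurableSet s) (hf : IntegrableOn f s μ) (hF : ∀ w ∈ s, ‖F w‖ ≤ K * f w) :
    ‖∫ w in s, F w ∂μ‖ ≤ K * ∫ w in s, f w ∂μ :=
  (norm_integral_le_of_norm_le (hf.const_mul K) (ae_restrict_of_forall_mem hs hF)).trans_eq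
    (integral_const_mul K f)

lemma norm_setIntegral_div_norm_sq_mul_smul_le {D : ℕ} {s t : Set (Euc D)} {c f : Euc D → ℝ}
    {K : ℝ} (hK : 0 ≤ K) (hs : MeasurableSet s) (hst : s ⊆ t) (hcK : ∀ w ∈ s, |c w| ≤ K * ‖w‖)
    (hf : Integrable f) (hnn : ∀ w, 0 ≤ f w) :
    ‖∫ w in s, ((c w / ‖w‖ ^ 2) * f w) • w‖ ≤ K * ∫ w in t, f w := by
  refine (norm_setIntegral_le_mul_setIntegral hs hf.integrableOn fun w hw => ?_).trans
    (mul_le_mul_of_nonneg_left (setIntegral_mono_set hf.integrableOn (ae_of_all _ hnn)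
      hst.eventuallyLE) hK)
  exact (norm_div_norm_sq_mul_smul_le hK (hcK w hw)).trans_eq (by rw [abs_of_nonneg (hnn w)])

section RadialMoments

variable {D : ℕ} {f : Euc D → ℝ}

lemma abs_apply_mul_apply_div_norm_sq_le_one (w : Euc D) (i j : Fin D) :
    |w i * w j / ‖w‖ ^ 2| ≤ 1 := by
  rw [abs_div, abs_mul, abs_of_nonneg (by positivity : (0 : ℝ) ≤ ‖w‖ ^ 2), sq]
  refine div_le_one_of_le₀ ?_ (by positivity)
  exact mul_le_mul (PiLp.norm_apply_le w i) (PiLp.norm_apply_le w j) (abs_nonneg _)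
    (norm_nonneg _)

lemma MeasureTheory.IntegrableOn.apply_mul_apply_div_norm_sq_mul {s : Set (Euc D)}
    (hf : IntegrableOn f s) (i j : Fin D) :
    IntegrableOn (fun w => (w i * w j / ‖w‖ ^ 2) * f w) s := by
  refine hf.bdd_mul (c := 1) ?_ (ae_of_all _ fun w => abs_apply_mul_apply_div_norm_sq_le_one w i j)
  exact (((PiLp.continuous_apply 2 _ i).mul (PiLp.continuous_apply 2 _ j)).measurable.div
    (continuous_norm.pow 2).measurable).aestronglyMeasurable

lemma setIntegral_ball_comp_linearIsometryEquiv {E G : Type*} [NormedAddCommGroup E]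
    [InnerProductSpace ℝ E] [FiniteDimensional ℝ E] [MeasurableSpace E] [BorelSpace E]
    [NormedAddCommGroup G] [NormedSpace ℝ G] (e : E ≃ₗᵢ[ℝ] E) (r : ℝ) (h : E → G) :
    ∫ w in ball 0 r, h (e w) = ∫ w in ball 0 r, h w := by
  have hpre : e ⁻¹' ball 0 r = ball 0 r := by ext w; simp
  rw [← e.measurePreserving.setIntegral_preimage_emb e.toHomeomorph.measurableEmbedding h, hpre]

def ballMoment (f : Euc D → ℝ) (r : ℝ) (i j : Fin D) : ℝ :=
  ∫ w in ball (0 : Euc D) r, (w i * w j / ‖w‖ ^ 2) * f w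

variable (hrad : ∀ x y : Euc D, ‖x‖ = ‖y‖ → f x = f y)
include hrad

/-- Reflecting the `i`-th coordinate changes the sign of the integrand. -/
lemma ballMoment_eq_zero_of_ne (r : ℝ) {i j : Fin D} (hij : i ≠ j) :
    ballMoment f r i j = 0 := by
  let e : Euc D ≃ₗᵢ[ℝ] Euc D :=
    LinearIsometryEquiv.piLpCongrRight 2 fun k => if k = i then .neg ℝ else .refl ℝ ℝ
  have he : ∀ w k, e w k = if k = i then -w k else w k := by
    intro w k
    by_cases hk : k = i <;> simp [e, hk]
  have hneg : ballMoment f r i j = -ballMoment f r i j := by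
    calc ballMoment f r i j
        = ∫ w in ball (0 : Euc D) r, (e w i * e w j / ‖e w‖ ^ 2) * f (e w) :=
          (setIntegral_ball_comp_linearIsometryEquiv e r _).symm
      _ = ∫ w in ball (0 : Euc D) r, -((w i * w j / ‖w‖ ^ 2) * f w) := by
          refine integral_congr_ae (ae_of_all _ fun w => ?_)
          simp only [he, if_true, if_neg hij.symm, e.norm_map, hrad (e w) w (e.norm_map w)]
          ring
      _ = -ballMoment f r i j := integral_neg _
  linarith

lemma ballMoment_diag_eq (r : ℝ) (i j : Fin D) :
    ballMoment f r i i = ballMoment f r j j := by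
  let e : Euc D ≃ₗᵢ[ℝ] Euc D := LinearIsometryEquiv.piLpCongrLeft 2 ℝ ℝ (Equiv.swap i j)
  have he : ∀ w, e w i = w j := by
    intro w
    simp [e, LinearIsometryEquiv.piLpCongrLeft_apply, Equiv.piCongrLeft']
  calc ballMoment f r i i
      = ∫ w in ball (0 : Euc D) r, (e w i * e w i / ‖e w‖ ^ 2) * f (e w) :=
        (setIntegral_ball_comp_linearIsometryEquiv e r _).symm
    _ = ballMoment f r j j := by
        refine integral_congr_ae (ae_of_all _ fun w => ?_)
        simp only [he, e.norm_map, hrad (e w) w (e.norm_map w)]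

omit hrad in
lemma sum_ballMoment_diag (hD : 0 < D) {r : ℝ} (hf : IntegrableOn f (ball 0 r)) :
    ∑ i, ballMoment f r i i = ∫ w in ball (0 : Euc D) r, f w := by
  have : Nonempty (Fin D) := ⟨⟨0, hD⟩⟩
  simp only [ballMoment]
  rw [← integral_finsetSum _ fun i _ => hf.apply_mul_apply_div_norm_sq_mul i i]
  refine integral_congr_ae ?_
  filter_upwards [ae_restrict_of_ae (measure_eq_zero_iff_ae_notMem.1 (measure_singleton 0))]
    with w hw
  have hw : ‖w‖ ≠ 0 := norm_ne_zero_iff.2 hw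
  rw [← Finset.sum_mul, ← Finset.sum_div]
  simp only [← sq, ← EuclideanSpace.real_norm_sq_eq, div_self (pow_ne_zero 2 hw), one_mul]

/-- By the two symmetries above, the moment matrix of a radial `f` is `(∫_{B(0,r)} f / D) • 1`. -/
lemma smul_setIntegral_ball_inner_div_norm_sq_eq {r : ℝ} (hf : IntegrableOn f (ball 0 r))
    (v : Euc D) :
    (D : ℝ) • ∫ w in ball (0 : Euc D) r, ((inner ℝ v w / ‖w‖ ^ 2) * f w) • w
      = (∫ w in ball (0 : Euc D) r, f w) • v := by
  rcases Nat.eq_zero_or_pos D with rfl | hD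
  · exact Subsingleton.elim _ _
  have hint := integrableOn_div_norm_sq_mul_smul (norm_nonneg v) measurableSet_ball
    (continuous_const.inner continuous_id).aestronglyMeasurable
    (fun w _ => abs_real_inner_le_norm v w) hf
  have hcoord : ∀ i, (∫ w in ball (0 : Euc D) r, ((inner ℝ v w / ‖w‖ ^ 2) * f w) • w) i
      = ∑ j, v j * ballMoment f r j i := by
    intro i
    refine ((EuclideanSpace.proj i).integral_comp_comm hint).symm.trans ?_
    simp only [ballMoment, ← integral_const_mul]
    rw [← integral_finsetSum _ fun j _ => (hf.apply_mul_apply_div_norm_sq_mul j i).const_mul _]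
    refine integral_congr_ae (ae_of_all _ fun w => ?_)
    simp only [EuclideanSpace.coe_proj, id, PiLp.smul_apply, smul_eq_mul, PiLp.inner_apply,
      RCLike.inner_apply, conj_trivial, Finset.sum_div, Finset.sum_mul]
    exact Finset.sum_congr rfl fun j _ => by ring
  ext i
  rw [PiLp.smul_apply, hcoord, Finset.sum_eq_single i (fun j _ hj => by
    rw [ballMoment_eq_zero_of_ne hrad r hj, mul_zero]) (by simp), ← sum_ballMoment_diag hD hf]
  simp only [PiLp.smul_apply, smul_eq_mul, ballMoment_diag_eq hrad r _ i, Finset.sum_const,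
    Finset.card_univ, Fintype.card_fin, nsmul_eq_mul]
  ring

end RadialMoments

lemma abs_sub_sub_inner_gradient_le {E : Type*} [NormedAddCommGroup E] [InnerProductSpace ℝ E]
    [CompleteSpace E] {u : E → ℝ} {x w : E} {δ ε : ℝ}
    (hdiff : ∀ z ∈ ball x δ, DifferentiableAt ℝ u z)
    (hgrad : ∀ z ∈ ball x δ, ‖fderiv ℝ u z - fderiv ℝ u x‖ ≤ ε) (hw : ‖w‖ < δ) :
    |u x - u (x - w) - inner ℝ (gradient u x) w| ≤ ε * ‖w‖ := by
  have hxw : x - w ∈ ball x δ := by simpa [dist_eq_norm] using hw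
  have hx : x ∈ ball x δ := mem_ball_self ((norm_nonneg w).trans_lt hw)
  have hmvt := (convex_ball x δ).norm_image_sub_le_of_norm_fderiv_le' hdiff hgrad hx hxw
  simp only [sub_sub_cancel_left, map_neg, norm_neg, Real.norm_eq_abs, sub_neg_eq_add] at hmvt
  rw [gradient, InnerProductSpace.toDual_symm_apply, ← abs_neg]
  convert hmvt using 2
  ring

lemma nlGrad_eq_setIntegral_preimage {D : ℕ} (Ω : Set (Euc D)) (f u : Euc D → ℝ) (x : Euc D) :
    nlGrad D Ω f u x
      = (D : ℝ) • ∫ w in (x - ·) ⁻¹' Ω, (((u x - u (x - w)) / ‖w‖ ^ 2) * f w) • w := by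
  rw [nlGrad, ← (Measure.measurePreserving_sub_left volume x).setIntegral_preimage_emb
    (MeasurableEquiv.subLeft x).measurableEmbedding]
  simp only [sub_sub_cancel]

lemma norm_nlGrad_sub_gradient_le {D : ℕ} {Ω : Set (Euc D)} {f u : Euc D → ℝ} {x : Euc D}
    {M δ ε : ℝ} (hΩ : MeasurableSet Ω) (hu : ContinuousOn u Ω) (hM : 0 ≤ M)
    (hLip : ∀ y ∈ Ω, |u x - u y| ≤ M * ‖x - y‖) (hball : ball x δ ⊆ Ω)
    (hdiff : ∀ z ∈ ball x δ, DifferentiableAt ℝ u z)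
    (hgrad : ∀ z ∈ ball x δ, ‖fderiv ℝ u z - fderiv ℝ u x‖ ≤ ε) (hε : 0 ≤ ε)
    (hf : Integrable f) (hnn : ∀ w, 0 ≤ f w) (hrad : ∀ x y : Euc D, ‖x‖ = ‖y‖ → f x = f y)
    (hf1 : ∫ w, f w = 1) :
    ‖nlGrad D Ω f u x - gradient u x‖
      ≤ (D * M + ‖gradient u x‖) * (∫ w in (ball 0 δ)ᶜ, f w) + D * ε := by
  set g := gradient u x
  set S := (x - ·) ⁻¹' Ω
  set τ := ∫ w in (ball (0 : Euc D) δ)ᶜ, f w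
  have hS : MeasurableSet S := hΩ.preimage (measurable_const.sub measurable_id)
  have hBS : ball 0 δ ⊆ S := fun w hw => hball (by simpa [dist_eq_norm] using hw)
  set F : Euc D → Euc D := fun w => (((u x - u (x - w)) / ‖w‖ ^ 2) * f w) • w
  set G : Euc D → Euc D := fun w => ((inner ℝ g w / ‖w‖ ^ 2) * f w) • w
  have hFint : IntegrableOn F S := by
    refine integrableOn_div_norm_sq_mul_smul hM hS ?_ (fun w hw => by simpa using hLip _ hw)
      hf.integrableOn
    exact (continuousOn_const.sub (hu.comp (continuous_const.sub continuous_id).continuousOn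
      fun w hw => hw)).aestronglyMeasurable hS
  have hGint : IntegrableOn G (ball 0 δ) := integrableOn_div_norm_sq_mul_smul (norm_nonneg g)
    measurableSet_ball (continuous_const.inner continuous_id).aestronglyMeasurable
    (fun w _ => abs_real_inner_le_norm g w) hf.integrableOn
  have hnear : ‖∫ w in ball 0 δ, F w - G w‖ ≤ ε := by
    have h := norm_setIntegral_div_norm_sq_mul_smul_le hε measurableSet_ball (Set.subset_univ _)
      (fun w hw => abs_sub_sub_inner_gradient_le hdiff hgrad (mem_ball_zero_iff.1 hw)) hf hnn
    rw [setIntegral_univ, hf1, mul_one] at h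
    have hFG : ∀ w, F w - G w = (((u x - u (x - w) - inner ℝ g w) / ‖w‖ ^ 2) * f w) • w :=
      fun w => by simp only [F, G, ← sub_smul, sub_div, sub_mul]
    simpa only [hFG] using h
  have hfar : ‖∫ w in S \ ball 0 δ, F w‖ ≤ M * τ :=
    norm_setIntegral_div_norm_sq_mul_smul_le hM (hS.diff measurableSet_ball)
      (Set.sdiff_subset_compl _ _) (fun w hw => by simpa using hLip _ hw.1) hf hnn
  have hmass : ∫ w in ball 0 δ, f w = 1 - τ := by
    rw [← hf1, ← integral_add_compl measurableSet_ball hf]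
    ring
  have hdecomp : nlGrad D Ω f u x - g
      = (D : ℝ) • (∫ w in ball 0 δ, F w - G w) + (D : ℝ) • (∫ w in S \ ball 0 δ, F w) - τ • g := by
    rw [nlGrad_eq_setIntegral_preimage, ← integral_inter_add_sdiff measurableSet_ball hFint,
      Set.inter_eq_self_of_subset_right hBS, integral_sub (hFint.mono_set hBS) hGint,
      smul_sub, smul_add, smul_setIntegral_ball_inner_div_norm_sq_eq hrad hf.integrableOn, hmass]
    module
  have hτ : 0 ≤ τ := setIntegral_nonneg measurableSet_ball.compl fun w _ => hnn w
  rw [hdecomp]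
  calc _ ≤ D * ‖∫ w in ball 0 δ, F w - G w‖ + D * ‖∫ w in S \ ball 0 δ, F w‖ + τ * ‖g‖ := by
        refine (norm_sub_le _ _).trans (add_le_add ((norm_add_le _ _).trans_eq ?_) ?_)
        · simp only [norm_smul, RCLike.norm_natCast]
        · rw [norm_smul, Real.norm_of_nonneg hτ]
    _ ≤ D * ε + D * (M * τ) + τ * ‖g‖ := by gcongr
    _ = (D * M + ‖g‖) * τ + D * ε := by ring

lemma continuousOn_gradient_of_contDiffOn {E : Type*} [NormedAddCommGroup E]
    [InnerProductSpace ℝ E] [CompleteSpace E] {u : E → ℝ} {Ω : Set E} (hΩ : IsOpen Ω)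
    (hu : ContDiffOn ℝ 1 u Ω) : ContinuousOn (gradient u) Ω :=
  (InnerProductSpace.toDual ℝ E).symm.continuous.comp_continuousOn
    (hu.continuousOn_fderiv_of_isOpen hΩ le_rfl)

namespace IsKernelSeq

variable {D : ℕ} {ρ : ℕ → Euc D → ℝ}

lemma integrable (hρ : IsKernelSeq D ρ) (n : ℕ) : Integrable (ρ n) := by
  by_contra h
  simpa [integral_undef h] using hρ.integral_one n

lemma comp (hρ : IsKernelSeq D ρ) {φ : ℕ → ℕ} (hφ : Tendsto φ atTop atTop) :
    IsKernelSeq D (fun m => ρ (φ m)) :=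
  ⟨fun m => hρ.nonneg (φ m), fun m => hρ.radial (φ m), fun m => hρ.integral_one (φ m),
    fun δ hδ => (hρ.tail δ hδ).comp hφ⟩

lemma tendsto_setIntegral_compl_ball (hρ : IsKernelSeq D ρ) {δ : ℝ} (hδ : 0 < δ) :
    Tendsto (fun n => ∫ w in (ball (0 : Euc D) δ)ᶜ, ρ n w) atTop (𝓝 0) := by
  refine squeeze_zero (fun n => setIntegral_nonneg measurableSet_ball.compl
    fun w _ => hρ.nonneg n w) (fun n => setIntegral_mono_set (hρ.integrable n).integrableOn
      (ae_of_all _ (hρ.nonneg n)) (LE.le.eventuallyLE fun w hw => ?_))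
    (hρ.tail (δ / 2) (half_pos hδ))
  simp only [Set.mem_compl_iff, mem_ball_zero_iff, not_lt] at hw
  exact (half_lt_self hδ).trans_le hw

end IsKernelSeq

lemma IsCompact.exists_pos_forall_norm_fderiv_sub_le {E F : Type*} [NormedAddCommGroup E]
    [NormedSpace ℝ E] [ProperSpace E] [NormedAddCommGroup F] [NormedSpace ℝ F] {u : E → F}
    {Ω V : Set E} (hV : IsCompact V) (hΩ : IsOpen Ω) (hVΩ : V ⊆ Ω) (hu : ContDiffOn ℝ 1 u Ω)
    {ε : ℝ} (hε : 0 < ε) :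
    ∃ δ > 0, ∀ x ∈ V, ball x δ ⊆ Ω ∧ ∀ y ∈ ball x δ, ‖fderiv ℝ u y - fderiv ℝ u x‖ ≤ ε := by
  obtain ⟨δ₀, hδ₀, hKΩ⟩ := hV.exists_cthickening_subset_open hΩ hVΩ
  obtain ⟨δ₁, hδ₁, hunif⟩ := Metric.uniformContinuousOn_iff.1
    (hV.cthickening.uniformContinuousOn_of_continuous
      ((hu.continuousOn_fderiv_of_isOpen hΩ le_rfl).mono hKΩ)) ε hε
  refine ⟨min δ₀ δ₁, lt_min hδ₀ hδ₁, fun x hx => ?_⟩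
  have hball : ball x (min δ₀ δ₁) ⊆ cthickening δ₀ V :=
    (ball_subset_ball (min_le_left _ _)).trans
      ((ball_subset_thickening hx δ₀).trans (thickening_subset_cthickening δ₀ V))
  refine ⟨hball.trans hKΩ, fun y hy => ?_⟩
  rw [← dist_eq_norm]
  exact (hunif y (hball hy) x (self_subset_cthickening V hx)
    ((mem_ball.1 hy).trans_le (min_le_right _ _))).le

lemma tendsto_nlGrad_sub_gradient {D : ℕ} {Ω V : Set (Euc D)} {ρ : ℕ → Euc D → ℝ}
    {u : Euc D → ℝ} {M : ℝ} (hΩ : IsOpen Ω) (hρ : IsKernelSeq D ρ) (hu : ContDiffOn ℝ 1 u Ω)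
    (hLip : ∀ x ∈ Ω, ∀ y ∈ Ω, |u x - u y| ≤ M * ‖x - y‖) (hV : IsCompact V) (hVΩ : V ⊆ Ω)
    {z : ℕ → Euc D} (hz : ∀ n, z n ∈ V) :
    Tendsto (fun n => nlGrad D Ω (ρ n) u (z n) - gradient u (z n)) atTop (𝓝 0) := by
  have hLip' : ∀ x ∈ Ω, ∀ y ∈ Ω, |u x - u y| ≤ max M 0 * ‖x - y‖ := fun x hx y hy =>
    (hLip x hx y hy).trans (mul_le_mul_of_nonneg_right (le_max_left M 0) (norm_nonneg _))
  obtain ⟨C, hC⟩ := hV.exists_bound_of_continuousOn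
    ((continuousOn_gradient_of_contDiffOn hΩ hu).mono hVΩ)
  rw [Metric.tendsto_nhds]
  intro ε hε
  obtain ⟨δ, hδ, hlocal⟩ := hV.exists_pos_forall_norm_fderiv_sub_le hΩ hVΩ hu
    (ε := ε / (2 * (D + 1))) (by positivity)
  have htail := ((hρ.tendsto_setIntegral_compl_ball hδ).const_mul (D * max M 0 + C)).eventually
    (gt_mem_nhds (a := ε / 2) (by simpa using half_pos hε))
  filter_upwards [htail] with n hn
  obtain ⟨hball, hgrad⟩ := hlocal _ (hz n)
  have hest := norm_nlGrad_sub_gradient_le hΩ.measurableSet hu.continuousOn (le_max_right M 0)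
    (hLip' _ (hVΩ (hz n))) hball
    (fun y hy => (hu.contDiffAt (hΩ.mem_nhds (hball hy))).differentiableAt one_ne_zero) hgrad
    (by positivity) (hρ.integrable n) (hρ.nonneg n) (hρ.radial n) (hρ.integral_one n)
  have hτ : 0 ≤ ∫ w in (ball (0 : Euc D) δ)ᶜ, ρ n w :=
    setIntegral_nonneg measurableSet_ball.compl fun w _ => hρ.nonneg n w
  rw [dist_zero_right]
  calc _ ≤ _ := hest
    _ ≤ (D * max M 0 + C) * (∫ w in (ball 0 δ)ᶜ, ρ n w) + D * (ε / (2 * (D + 1))) := by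
        gcongr
        exact hC _ (hz n)
    _ < ε / 2 + ε / 2 := by
        refine add_lt_add hn ?_
        rw [mul_div_assoc', div_lt_div_iff₀ (by positivity) two_pos]
        nlinarith
    _ = ε := add_halves ε

lemma tendsto_nlGrad {D : ℕ} {Ω V : Set (Euc D)} {ρ : ℕ → Euc D → ℝ}
    {u : Euc D → ℝ} {M : ℝ} (hΩ : IsOpen Ω) (hρ : IsKernelSeq D ρ) (hu : ContDiffOn ℝ 1 u Ω)
    (hLip : ∀ x ∈ Ω, ∀ y ∈ Ω, |u x - u y| ≤ M * ‖x - y‖) (hV : IsCompact V) (hVΩ : V ⊆ Ω)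
    {z : ℕ → Euc D} (hz : ∀ n, z n ∈ V) {y : Euc D} (hzy : Tendsto z atTop (𝓝 y)) :
    Tendsto (fun n => nlGrad D Ω (ρ n) u (z n)) atTop (𝓝 (gradient u y)) := by
  have hy : y ∈ Ω := hVΩ (hV.isClosed.mem_of_tendsto hzy (Eventually.of_forall hz))
  have hgrad := ((continuousOn_gradient_of_contDiffOn hΩ hu).continuousAt
    (hΩ.mem_nhds hy)).tendsto.comp hzy
  simpa using (tendsto_nlGrad_sub_gradient hΩ hρ hu hLip hV hVΩ hz).add hgrad

lemma IsUniqueLinesearchMin.eq_of_tendsto {D : ℕ} {u : Euc D → ℝ} {A a a' : ℝ} {z d : Euc D}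
    (h : IsUniqueLinesearchMin D u A z d a) {zs ds : ℕ → Euc D} {as : ℕ → ℝ}
    (hle : ∀ m, u (zs m - as m • ds m) ≤ u (zs m - a • ds m))
    (hz : Tendsto zs atTop (𝓝 z)) (hd : Tendsto ds atTop (𝓝 d)) (has : Tendsto as atTop (𝓝 a'))
    (ha' : a' ∈ Set.Icc 0 A) (hu' : ContinuousAt u (z - a' • d))
    (hu : ContinuousAt u (z - a • d)) : a' = a := by
  have hlim : u (z - a' • d) ≤ u (z - a • d) :=
    le_of_tendsto_of_tendsto' (hu'.tendsto.comp (hz.sub (has.smul hd)))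
      (hu.tendsto.comp (hz.sub (tendsto_const_nhds.smul hd))) hle
  exact h.2.2 a' ha' (le_antisymm hlim (h.2.1 a' ha'))

section Iterates

variable {D : ℕ} {Ω V : Set (Euc D)} {ρ : ℕ → Euc D → ℝ} {u : Euc D → ℝ} {M A : ℝ}
  {x : ℕ → Euc D} {xn : ℕ → ℕ → Euc D} {α : ℕ → ℝ} {αn : ℕ → ℕ → ℝ}
  (hΩ : IsOpen Ω) (hρ : IsKernelSeq D ρ) (hu : ContDiffOn ℝ 1 u Ω)
  (hLip : ∀ x ∈ Ω, ∀ y ∈ Ω, |u x - u y| ≤ M * ‖x - y‖)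
  (hls : ∀ k, IsUniqueLinesearchMin D u A (x k) (gradient u (x k)) (α k))
  (hlsn : ∀ n k, IsUniqueLinesearchMin D u A (xn n k) (nlGrad D Ω (ρ n) u (xn n k)) (αn n k))
  (hiter : ∀ k, x (k + 1) = x k - α k • gradient u (x k))
  (hitern : ∀ n k, xn n (k + 1) = xn n k - αn n k • nlGrad D Ω (ρ n) u (xn n k))
  (hV : IsCompact V) (hVΩ : V ⊆ Ω) (hinV : ∀ k, x k ∈ V) (hinVn : ∀ n k, xn n k ∈ V)
include hΩ hρ hu hLip hls hlsn hiter hitern hV hVΩ hinV hinVn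

lemma exists_subseq_tendsto_stepsize_and_iterate_succ (k : ℕ) {φ : ℕ → ℕ}
    (hφ : StrictMono φ) (hx : Tendsto (fun m => xn (φ m) k) atTop (𝓝 (x k))) :
    ∃ σ : ℕ → ℕ, StrictMono σ ∧ Tendsto (fun m => αn (φ (σ m)) k) atTop (𝓝 (α k)) ∧
      Tendsto (fun m => xn (φ (σ m)) (k + 1)) atTop (𝓝 (x (k + 1))) := by
  have hd := tendsto_nlGrad hΩ (hρ.comp hφ.tendsto_atTop) hu hLip hV hVΩ
    (fun m => hinVn (φ m) k) hx
  obtain ⟨a, ha, σ, hσ, has⟩ := isCompact_Icc.tendsto_subseq fun m => (hlsn (φ m) k).1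
  have hx' := hx.comp hσ.tendsto_atTop
  have hd' := hd.comp hσ.tendsto_atTop
  have hnext : Tendsto (fun m => xn (φ (σ m)) (k + 1)) atTop
      (𝓝 (x k - a • gradient u (x k))) := by
    simp only [hitern]
    exact hx'.sub (has.smul hd')
  have hcont : ∀ y ∈ V, ContinuousAt u y := fun y hy =>
    hu.continuousOn.continuousAt (hΩ.mem_nhds (hVΩ hy))
  obtain rfl : a = α k := (hls k).eq_of_tendsto
    (fun m => (hlsn (φ (σ m)) k).2.1 (α k) (hls k).1) hx' hd' has ha
    (hcont _ (hV.isClosed.mem_of_tendsto hnext (Eventually.of_forall fun m => hinVn _ _)))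
    (hiter k ▸ hcont _ (hinV (k + 1)))
  exact ⟨σ, hσ, has, hiter k ▸ hnext⟩

lemma exists_subseq_tendsto_iterate (h0 : ∀ n, xn n 0 = x 0) (k : ℕ) :
    ∃ φ : ℕ → ℕ, StrictMono φ ∧ Tendsto (fun m => xn (φ m) k) atTop (𝓝 (x k)) := by
  induction k with
  | zero => exact ⟨id, strictMono_id, by simp only [id, h0, tendsto_const_nhds]⟩
  | succ k ih =>
    obtain ⟨φ, hφ, hx⟩ := ih
    obtain ⟨σ, hσ, -, hx'⟩ := exists_subseq_tendsto_stepsize_and_iterate_succ hΩ hρ hu hLip hls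
      hlsn hiter hitern hV hVΩ hinV hinVn k hφ hx
    exact ⟨φ ∘ σ, hφ.comp hσ, hx'⟩

end Iterates

theorem nonlocal_gd_optimal_stepsize_comparison_general
    (D : ℕ) (Ω : Set (Euc D)) (hΩ : NiceDomain D Ω)
    (ρ : ℕ → Euc D → ℝ) (hρ : IsKernelSeq D ρ)
    (M : ℝ) (u : Euc D → ℝ)
    (hC2 : ContDiffOn ℝ 2 u Ω)
    (hLip : ∀ x ∈ Ω, ∀ y ∈ Ω, |u x - u y| ≤ M * ‖x - y‖)
    (A : ℝ)
    (x₀ : Euc D)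
    (x : ℕ → Euc D) (xn : ℕ → ℕ → Euc D) (α : ℕ → ℝ) (αn : ℕ → ℕ → ℝ)
    (hinit : x 0 = x₀) (hinitn : ∀ n, xn n 0 = x₀)
    (hls : ∀ k, IsUniqueLinesearchMin D u A (x k) (gradient u (x k)) (α k))
    (hlsn : ∀ n k, IsUniqueLinesearchMin D u A (xn n k) (nlGrad D Ω (ρ n) u (xn n k)) (αn n k))
    (hiter : ∀ k, x (k + 1) = x k - α k • gradient u (x k))
    (hitern : ∀ n k, xn n (k + 1) = xn n k - αn n k • nlGrad D Ω (ρ n) u (xn n k))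
    (V : Set (Euc D)) (hV : IsCompact V) (hVΩ : V ⊆ Ω)
    (hinV : ∀ k, x k ∈ V) (hinVn : ∀ n k, xn n k ∈ V) :
    ∀ k : ℕ,
      (∃ φ : ℕ → ℕ, StrictMono φ ∧
        Tendsto (fun m => αn (φ m) k) atTop (nhds (α k))) ∧
      (∃ ψ : ℕ → ℕ, StrictMono ψ ∧
        Tendsto (fun m => xn (ψ m) k) atTop (nhds (x k))) := by
  intro k
  have hC1 : ContDiffOn ℝ 1 u Ω := hC2.of_le one_le_two
  obtain ⟨φ, hφ, hx⟩ := exists_subseq_tendsto_iterate hΩ.isOpen hρ hC1 hLip hls hlsn hiter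
    hitern hV hVΩ hinV hinVn (fun n => (hinitn n).trans hinit.symm) k
  obtain ⟨σ, hσ, hα, -⟩ := exists_subseq_tendsto_stepsize_and_iterate_succ hΩ.isOpen hρ hC1
    hLip hls hlsn hiter hitern hV hVΩ hinV hinVn k hφ hx
  exact ⟨⟨φ ∘ σ, hφ.comp hσ, hα⟩, φ, hφ, hx⟩

/-- optimal (exact linesearch) stepsize comparison of classical and nonlocal
gradient descent: for each `k` some subsequence of the nonlocal stepsizes `α^{k,n}` converges
to the classical stepsize `α^k`, and some subsequence of the nonlocal iterates `x^{k,n}`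
converges to the classical iterate `x^k`. -/
theorem nonlocal_gd_optimal_stepsize_comparison
    (D : ℕ) (hD : 0 < D) (Ω : Set (Euc D)) (hΩ : NiceDomain D Ω)
    (ρ : ℕ → Euc D → ℝ) (hρ : IsKernelSeq D ρ)
    (M : ℝ) (u : Euc D → ℝ)
    (hC2 : ContDiffOn ℝ 2 u Ω)
    (hLip : ∀ x ∈ Ω, ∀ y ∈ Ω, |u x - u y| ≤ M * ‖x - y‖)
    (A : ℝ) (hA : 0 < A)
    (x₀ : Euc D) (hx₀ : x₀ ∈ Ω)
    (x : ℕ → Euc D) (xn : ℕ → ℕ → Euc D) (α : ℕ → ℝ) (αn : ℕ → ℕ → ℝ)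
    (hinit : x 0 = x₀) (hinitn : ∀ n, xn n 0 = x₀)
    (hls : ∀ k, IsUniqueLinesearchMin D u A (x k) (gradient u (x k)) (α k))
    (hlsn : ∀ n k, IsUniqueLinesearchMin D u A (xn n k) (nlGrad D Ω (ρ n) u (xn n k)) (αn n k))
    (hiter : ∀ k, x (k + 1) = x k - α k • gradient u (x k))
    (hitern : ∀ n k, xn n (k + 1) = xn n k - αn n k • nlGrad D Ω (ρ n) u (xn n k))
    (V : Set (Euc D)) (hV : IsCompact V) (hVΩ : V ⊆ Ω)
    (hinV : ∀ k, x k ∈ V) (hinVn : ∀ n k, xn n k ∈ V) :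
    ∀ k : ℕ,
      (∃ φ : ℕ → ℕ, StrictMono φ ∧
        Tendsto (fun m => αn (φ m) k) atTop (nhds (α k))) ∧
      (∃ ψ : ℕ → ℕ, StrictMono ψ ∧
        Tendsto (fun m => xn (ψ m) k) atTop (nhds (x k))) :=
  nonlocal_gd_optimal_stepsize_comparison_general D Ω hΩ ρ hρ M u hC2 hLip A x₀ x xn α αn hinit
    hinitn hls hlsn hiter hitern V hV hVΩ hinV hinVn

end
end

section
/- Let u ∈ C¹(Ω̄) be convex and fix x ∈ Ω. Then for every ε > 0 there exists N > 0 such that for all n > N and all y ∈ Ω: u(y) − u(x) ≥ (y − x)ᵀ∇_n u(x) − ε. In other words, ∇_n u(x) is an ε-subgradient of u at x for all sufficiently large n. -/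
open MeasureTheory Filter Topology Metric

noncomputable section

/-!
Let `g = ∇u(x)`. A radial kernel of unit mass satisfies `D ∫ ⟨g, w⟩ w / ‖w‖² ρ(w) dw = g`: the
mixed second moments `∫ wᵢ wⱼ / ‖w‖² ρ` vanish by reflecting one coordinate, and the pure ones are
equal by permuting coordinates and sum to `∫ ρ = 1`. Hence `∇_n u(x) - g` is `D` times the
integral over `Ω` of the first-order Taylor remainder of `u` at `x` against
`ρ_n(x - y) (x - y) / ‖x - y‖²`, minus the part of the moment integral lying outside `Ω`. Both
are bounded by integrals against `ρ_n(x - ·)` of functions that are bounded and small near `x`;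
as the mass of `ρ_n(x - ·)` concentrates at `x`, `∇_n u(x) → g`. Convexity gives `u(y) - u(x) ≥ ⟨g, y - x⟩`, and
`⟨y - x, ∇_n u(x) - g⟩ ≤ R ‖∇_n u(x) - g‖` on `Ω ⊆ closedBall x R`.
-/

open Set

theorem ConvexOn.le_sub_of_hasFDerivAt {E : Type*} [NormedAddCommGroup E] [NormedSpace ℝ E]
    {s : Set E} {f : E → ℝ} {f' : E →L[ℝ] ℝ} {x y : E} (hf : ConvexOn ℝ s f) (hx : x ∈ s)
    (hy : y ∈ s) (hf' : HasFDerivAt f f' x) : f' (y - x) ≤ f y - f x := by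
  let l : ℝ →ᵃ[ℝ] E := AffineMap.lineMap x y
  have hmaps : MapsTo l (Icc 0 1) s := by
    simpa only [l, mapsTo_iff_image_subset, ← segment_eq_image_lineMap]
      using hf.1.segment_subset hx hy
  have hl : ConvexOn ℝ (Icc 0 1) (f ∘ l) := (hf.comp_affineMap l).subset hmaps (convex_Icc 0 1)
  have hderiv : HasDerivAt (f ∘ l) (f' (y - x)) 0 := by
    have hf'0 : HasFDerivAt f f' (l 0) := by simpa [l] using hf'
    exact hf'0.comp_hasDerivAt 0 (AffineMap.hasDerivAt_lineMap (a := x) (b := y))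
  simpa [l, slope_def_field] using
    hl.le_slope_of_hasDerivAt (left_mem_Icc.2 zero_le_one) (right_mem_Icc.2 zero_le_one)
      zero_lt_one hderiv

theorem DifferentiableAt.exists_norm_sub_le_mul_norm_sub {E F : Type*} [NormedAddCommGroup E]
    [NormedSpace ℝ E] [NormedAddCommGroup F] [NormedSpace ℝ F] {f : E → F} {x : E}
    (hf : DifferentiableAt ℝ f x) {s : Set E} {C : ℝ} (hC : ∀ y ∈ s, ‖f y‖ ≤ C) :
    ∃ L, 0 ≤ L ∧ ∀ y ∈ s, ‖f y - f x‖ ≤ L * ‖y - x‖ := by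
  obtain ⟨c, hc0, hc⟩ := hf.isBigO_sub.exists_pos
  obtain ⟨δ, hδ, hnear⟩ := Metric.eventually_nhds_iff.1 hc.bound
  refine ⟨max c ((C + ‖f x‖) / δ), le_max_of_le_left hc0.le, fun y hy => ?_⟩
  rcases lt_or_ge ‖y - x‖ δ with hyx | hyx
  · exact (hnear (by rwa [dist_eq_norm])).trans
      (mul_le_mul_of_nonneg_right (le_max_left _ _) (norm_nonneg _))
  · calc ‖f y - f x‖ ≤ C + ‖f x‖ := (norm_sub_le _ _).trans (by linarith [hC y hy])
      _ = (C + ‖f x‖) / δ * δ := by field_simp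
      _ ≤ max c ((C + ‖f x‖) / δ) * ‖y - x‖ :=
        mul_le_mul (le_max_right _ _) hyx hδ.le (le_max_of_le_right
          (div_nonneg (add_nonneg ((norm_nonneg _).trans (hC y hy)) (norm_nonneg _)) hδ.le))

lemma norm_div_norm_sq_mul_smul {E : Type*} [NormedAddCommGroup E] [NormedSpace ℝ E]
    (a : ℝ) {c : ℝ} (hc : 0 ≤ c) (v : E) : ‖(a / ‖v‖ ^ 2 * c) • v‖ = |a| / ‖v‖ * c := by
  rcases eq_or_ne v 0 with rfl | hv
  · simp
  have : ‖v‖ ≠ 0 := norm_ne_zero_iff.2 hv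
  rw [norm_smul, norm_mul, norm_div, norm_pow, norm_norm, Real.norm_of_nonneg hc, Real.norm_eq_abs]
  field_simp

section SecondMoments

variable {D : ℕ} {ρ : Euc D → ℝ}

lemma abs_coord_mul_coord_le_norm_sq (w : Euc D) (i j : Fin D) : |w i * w j| ≤ ‖w‖ ^ 2 := by
  rw [abs_mul, sq]
  exact mul_le_mul (PiLp.norm_apply_le w i) (PiLp.norm_apply_le w j) (abs_nonneg _)
    (norm_nonneg _)

lemma integrable_coord_mul_coord_div_norm_sq_mul (hρ : Integrable ρ) (hnn : ∀ w, 0 ≤ ρ w)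
    (i j : Fin D) : Integrable (fun w : Euc D => w i * w j / ‖w‖ ^ 2 * ρ w) := by
  have hmeas : Measurable fun w : Euc D => w i * w j / ‖w‖ ^ 2 := by fun_prop
  refine hρ.mono' (hmeas.aestronglyMeasurable.mul hρ.1) (ae_of_all _ fun w => ?_)
  calc ‖w i * w j / ‖w‖ ^ 2 * ρ w‖ = |w i * w j| / ‖w‖ ^ 2 * ρ w := by
        rw [norm_mul, norm_div, norm_pow, norm_norm, Real.norm_of_nonneg (hnn w),
          Real.norm_eq_abs]
    _ ≤ 1 * ρ w := by
        gcongr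
        · exact hnn w
        · exact div_le_one_of_le₀ (abs_coord_mul_coord_le_norm_sq w i j) (by positivity)
    _ = ρ w := one_mul _

lemma integral_coord_mul_coord_div_norm_sq_mul_of_ne
    (hrad : ∀ a b : Euc D, ‖a‖ = ‖b‖ → ρ a = ρ b) {i j : Fin D} (hij : i ≠ j) :
    ∫ w : Euc D, w i * w j / ‖w‖ ^ 2 * ρ w = 0 := by
  classical
  let e : Euc D ≃ₗᵢ[ℝ] Euc D := LinearIsometryEquiv.piLpCongrRight 2
    fun k => if k = i then LinearIsometryEquiv.neg ℝ else LinearIsometryEquiv.refl ℝ ℝ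
  have hodd : ∀ w : Euc D, (e w) i * (e w) j / ‖e w‖ ^ 2 * ρ (e w)
      = -(w i * w j / ‖w‖ ^ 2 * ρ w) := fun w => by
    rw [hrad (e w) w (e.norm_map w), e.norm_map w]
    simp only [e, LinearIsometryEquiv.piLpCongrRight_apply, LinearIsometryEquiv.coe_neg,
      LinearIsometryEquiv.coe_refl, ↓reduceIte, hij.symm, id_eq, neg_mul]
    ring
  have := e.measurePreserving.integral_comp e.toHomeomorph.measurableEmbedding
    fun w : Euc D => w i * w j / ‖w‖ ^ 2 * ρ w
  simp only [hodd, integral_neg] at this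
  linarith

lemma integral_coord_mul_self_div_norm_sq_mul_eq (hrad : ∀ a b : Euc D, ‖a‖ = ‖b‖ → ρ a = ρ b)
    (i j : Fin D) :
    ∫ w : Euc D, w i * w i / ‖w‖ ^ 2 * ρ w = ∫ w : Euc D, w j * w j / ‖w‖ ^ 2 * ρ w := by
  let e : Euc D ≃ₗᵢ[ℝ] Euc D := LinearIsometryEquiv.piLpCongrLeft 2 ℝ ℝ (Equiv.swap i j)
  have hswap : ∀ w : Euc D, (e w) i * (e w) i / ‖e w‖ ^ 2 * ρ (e w)
      = w j * w j / ‖w‖ ^ 2 * ρ w := fun w => by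
    rw [hrad (e w) w (e.norm_map w), e.norm_map w]
    simp [e, LinearIsometryEquiv.piLpCongrLeft_apply, Equiv.piCongrLeft'_apply, Equiv.symm_swap]
  rw [← e.measurePreserving.integral_comp e.toHomeomorph.measurableEmbedding
    fun w : Euc D => w i * w i / ‖w‖ ^ 2 * ρ w]
  simp only [hswap]

lemma integral_coord_mul_self_div_norm_sq_mul (hrad : ∀ a b : Euc D, ‖a‖ = ‖b‖ → ρ a = ρ b)
    (hρ : Integrable ρ) (hnn : ∀ w, 0 ≤ ρ w) (h1 : ∫ w, ρ w = 1) (i : Fin D) :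
    ∫ w : Euc D, w i * w i / ‖w‖ ^ 2 * ρ w = (D : ℝ)⁻¹ := by
  have : Nontrivial (Euc D) := ⟨EuclideanSpace.single i 1, 0, by simp⟩
  have hsum : ∑ j : Fin D, ∫ w : Euc D, w j * w j / ‖w‖ ^ 2 * ρ w = 1 := by
    rw [← integral_finsetSum _ fun j _ => integrable_coord_mul_coord_div_norm_sq_mul hρ hnn j j,
      ← h1]
    refine integral_congr_ae ?_
    filter_upwards [measure_eq_zero_iff_ae_notMem.1 (measure_singleton (0 : Euc D))] with w hw
    have hw2 : ‖w‖ ^ 2 ≠ 0 := pow_ne_zero 2 (norm_ne_zero_iff.2 hw)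
    rw [← Finset.sum_mul, ← Finset.sum_div]
    simp_rw [← sq, ← EuclideanSpace.real_norm_sq_eq, div_self hw2, one_mul]
  rw [Finset.sum_congr rfl fun j _ => integral_coord_mul_self_div_norm_sq_mul_eq hrad j i,
    Finset.sum_const, Finset.card_univ, Fintype.card_fin, nsmul_eq_mul] at hsum
  exact eq_inv_of_mul_eq_one_right hsum

lemma norm_inner_div_norm_sq_mul_smul_le (g w : Euc D) (hw : 0 ≤ ρ w) :
    ‖(inner ℝ g w / ‖w‖ ^ 2 * ρ w) • w‖ ≤ ‖g‖ * ρ w := by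
  rcases eq_or_ne w 0 with rfl | hw0
  · simpa using mul_nonneg (norm_nonneg g) hw
  have hpos : 0 < ‖w‖ := norm_pos_iff.2 hw0
  calc ‖(inner ℝ g w / ‖w‖ ^ 2 * ρ w) • w‖ = |inner ℝ g w| / ‖w‖ * ρ w :=
        norm_div_norm_sq_mul_smul _ hw w
    _ ≤ ‖g‖ * ‖w‖ / ‖w‖ * ρ w := by gcongr; exact abs_real_inner_le_norm g w
    _ = ‖g‖ * ρ w := by field_simp

lemma integrable_inner_div_norm_sq_mul_smul (hρ : Integrable ρ) (hnn : ∀ w, 0 ≤ ρ w)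
    (g : Euc D) : Integrable fun w : Euc D => (inner ℝ g w / ‖w‖ ^ 2 * ρ w) • w := by
  have hmeas : Measurable fun w : Euc D => inner ℝ g w / ‖w‖ ^ 2 := by fun_prop
  exact (hρ.const_mul ‖g‖).mono' ((hmeas.aestronglyMeasurable.mul hρ.1).smul
    aestronglyMeasurable_id) (ae_of_all _ fun w => norm_inner_div_norm_sq_mul_smul_le g w (hnn w))

lemma natCast_smul_integral_inner_div_norm_sq_mul_smul
    (hrad : ∀ a b : Euc D, ‖a‖ = ‖b‖ → ρ a = ρ b) (hρ : Integrable ρ) (hnn : ∀ w, 0 ≤ ρ w)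
    (h1 : ∫ w, ρ w = 1) (g : Euc D) :
    (D : ℝ) • ∫ w : Euc D, (inner ℝ g w / ‖w‖ ^ 2 * ρ w) • w = g := by
  ext i
  have hcoord : ∀ w : Euc D, ((inner ℝ g w / ‖w‖ ^ 2 * ρ w) • w) i
      = ∑ j, g j * (w j * w i / ‖w‖ ^ 2 * ρ w) := fun w => by
    simp only [PiLp.smul_apply, smul_eq_mul, PiLp.inner_apply, RCLike.inner_apply, conj_trivial,
      Finset.sum_div, Finset.sum_mul]
    exact Finset.sum_congr rfl fun j _ => by ring
  have hD : (D : ℝ) ≠ 0 := Nat.cast_ne_zero.2 (Fin.pos i).ne'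
  have hint : ∀ j, Integrable fun w : Euc D => g j * (w j * w i / ‖w‖ ^ 2 * ρ w) := fun j =>
    (integrable_coord_mul_coord_div_norm_sq_mul hρ hnn j i).const_mul (g j)
  rw [PiLp.smul_apply, smul_eq_mul,
    eval_integral_piLp (integrable_inner_div_norm_sq_mul_smul hρ hnn g).eval_piLp,
    integral_congr_ae (ae_of_all _ hcoord), integral_finsetSum _ fun j _ => hint j,
    Finset.sum_eq_single i (fun j _ hji => by
      rw [integral_const_mul, integral_coord_mul_coord_div_norm_sq_mul_of_ne hrad hji, mul_zero])
      (by simp), integral_const_mul, integral_coord_mul_self_div_norm_sq_mul hrad hρ hnn h1 i]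
  field_simp

end SecondMoments

section KernelEstimates

variable {D : ℕ}

lemma IsKernelSeq.integrable_s8 {ρ : ℕ → Euc D → ℝ} (hρ : IsKernelSeq D ρ) (n : ℕ) :
    Integrable (ρ n) := by
  by_contra h
  simpa [integral_undef h] using hρ.integral_one n

lemma setIntegral_mul_comp_sub_le {ρ : Euc D → ℝ} (hρ : Integrable ρ) (hnn : ∀ w, 0 ≤ ρ w)
    (h1 : ∫ w, ρ w = 1) {s : Set (Euc D)} (hs : MeasurableSet s) {φ : Euc D → ℝ} {x : Euc D}
    {δ η B : ℝ} (hη : 0 ≤ η) (hB : 0 ≤ B) (hφ0 : ∀ y ∈ s, 0 ≤ φ y)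
    (hnear : ∀ y ∈ s, ‖x - y‖ ≤ δ → φ y ≤ η) (hfar : ∀ y ∈ s, φ y ≤ B) :
    ∫ y in s, φ y * ρ (x - y) ≤ η + B * ∫ w in {w | δ < ‖w‖}, ρ w := by
  have htail : MeasurableSet {w : Euc D | δ < ‖w‖} := measurableSet_lt measurable_const
    measurable_norm
  set G : Euc D → ℝ := fun w => η * ρ w + B * {w : Euc D | δ < ‖w‖}.indicator ρ w
  have hG : Integrable G := (hρ.const_mul η).add ((hρ.indicator htail).const_mul B)
  have hind : ∀ w, 0 ≤ B * {w : Euc D | δ < ‖w‖}.indicator ρ w := fun w =>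
    mul_nonneg hB (indicator_nonneg (fun w _ => hnn w) w)
  have hG0 : ∀ w, 0 ≤ G w := fun w => add_nonneg (mul_nonneg hη (hnn w)) (hind w)
  have hle : ∀ y ∈ s, φ y * ρ (x - y) ≤ G (x - y) := fun y hy => by
    rcases le_or_gt ‖x - y‖ δ with hxy | hxy
    · exact (mul_le_mul_of_nonneg_right (hnear y hy hxy) (hnn (x - y))).trans
        (le_add_of_nonneg_right (hind (x - y)))
    · simp only [G, indicator_of_mem (show x - y ∈ {w : Euc D | δ < ‖w‖} from hxy)]
      linarith [mul_le_mul_of_nonneg_right (hfar y hy) (hnn (x - y)), mul_nonneg hη (hnn (x - y))]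
  calc ∫ y in s, φ y * ρ (x - y) ≤ ∫ y in s, G (x - y) :=
        integral_mono_of_nonneg ((ae_restrict_iff' hs).2 (ae_of_all _ fun y hy =>
          mul_nonneg (hφ0 y hy) (hnn _))) (hG.comp_sub_left x).integrableOn
          ((ae_restrict_iff' hs).2 (ae_of_all _ hle))
    _ ≤ ∫ y, G (x - y) := setIntegral_le_integral (hG.comp_sub_left x) (ae_of_all _ fun y => hG0 _)
    _ = η + B * ∫ w in {w | δ < ‖w‖}, ρ w := by
        rw [integral_sub_left_eq_self G, integral_add (hρ.const_mul η)
          ((hρ.indicator htail).const_mul B), integral_const_mul, integral_const_mul, h1,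
          integral_indicator htail, mul_one]

theorem tendsto_setIntegral_mul_comp_sub {ρ : ℕ → Euc D → ℝ} (hρ : IsKernelSeq D ρ)
    {s : Set (Euc D)} (hs : MeasurableSet s) {φ : Euc D → ℝ} {x : Euc D} {B : ℝ}
    (hφ0 : ∀ y ∈ s, 0 ≤ φ y) (hφB : ∀ y ∈ s, φ y ≤ B) (hφ : Tendsto φ (𝓝[s] x) (𝓝 0)) :
    Tendsto (fun n => ∫ y in s, φ y * ρ n (x - y)) atTop (𝓝 0) := by
  refine tendsto_order.2 ⟨fun a ha => Eventually.of_forall fun n => ha.trans_le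
    (setIntegral_nonneg hs fun y hy => mul_nonneg (hφ0 y hy) (hρ.nonneg n _)), fun η hη => ?_⟩
  obtain ⟨δ, hδ, hnear⟩ := Metric.eventually_nhds_iff.1 <| eventually_nhdsWithin_iff.1 <|
    hφ.eventually (gt_mem_nhds (half_pos hη))
  have htail : ∀ᶠ n in atTop, max B 0 * ∫ w in {w | δ / 2 < ‖w‖}, ρ n w < η / 2 :=
    ((hρ.tail (δ / 2) (half_pos hδ)).const_mul (max B 0)).eventually
      (gt_mem_nhds (by rw [mul_zero]; exact half_pos hη))
  filter_upwards [htail] with n hn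
  have := setIntegral_mul_comp_sub_le (x := x) (δ := δ / 2) (hρ.integrable_s8 n) (hρ.nonneg n)
    (hρ.integral_one n) hs (half_pos hη).le (le_max_right B 0) hφ0
    (fun y hy hxy => (hnear (by rw [dist_comm, dist_eq_norm]; linarith) hy).le)
    (fun y hy => (hφB y hy).trans (le_max_left B 0))
  linarith

end KernelEstimates

section NonlocalGradient

variable {D : ℕ} {Ω : Set (Euc D)} {u : Euc D → ℝ} {x : Euc D}

lemma integrableOn_nlGrad_integrand {ρ : Euc D → ℝ} (hρ : Integrable ρ) (hnn : ∀ w, 0 ≤ ρ w)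
    (hΩ : MeasurableSet Ω) (hu : ContinuousOn u Ω) {L : ℝ} (hL0 : 0 ≤ L)
    (hL : ∀ y ∈ Ω, ‖u y - u x‖ ≤ L * ‖y - x‖) :
    IntegrableOn (fun y => ((u x - u y) / ‖x - y‖ ^ 2 * ρ (x - y)) • (x - y)) Ω := by
  have hmeas : AEStronglyMeasurable (fun y => (u x - u y) / ‖x - y‖ ^ 2) (volume.restrict Ω) :=
    ((hu.aestronglyMeasurable hΩ).aemeasurable.const_sub (u x)).div
      (by fun_prop : Measurable fun y : Euc D => ‖x - y‖ ^ 2).aemeasurable |>.aestronglyMeasurable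
  refine Integrable.mono' ((hρ.comp_sub_left x).const_mul L).integrableOn
    ((hmeas.mul (hρ.comp_sub_left x).1.restrict).smul (by fun_prop))
    ((ae_restrict_iff' hΩ).2 (ae_of_all _ fun y hy => ?_))
  rw [norm_div_norm_sq_mul_smul _ (hnn _), ← Real.norm_eq_abs, norm_sub_rev, norm_sub_rev x]
  rcases eq_or_ne y x with rfl | hyx
  · simpa using mul_nonneg hL0 (hnn 0)
  have hpos : 0 < ‖y - x‖ := norm_pos_iff.2 (sub_ne_zero.2 hyx)
  calc ‖u y - u x‖ / ‖y - x‖ * ρ (x - y) ≤ L * ‖y - x‖ / ‖y - x‖ * ρ (x - y) := by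
        gcongr
        · exact hnn _
        · exact hL y hy
    _ = L * ρ (x - y) := by field_simp

lemma norm_nlGrad_sub_le {ρ : Euc D → ℝ} (hrad : ∀ a b : Euc D, ‖a‖ = ‖b‖ → ρ a = ρ b)
    (hρ : Integrable ρ) (hnn : ∀ w, 0 ≤ ρ w) (h1 : ∫ w, ρ w = 1) (hΩ : MeasurableSet Ω)
    (hF : IntegrableOn (fun y => ((u x - u y) / ‖x - y‖ ^ 2 * ρ (x - y)) • (x - y)) Ω)
    (g : Euc D) :
    ‖nlGrad D Ω ρ u x - g‖ ≤ D * ((∫ y in Ω,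
      ‖y - x‖⁻¹ * ‖u y - u x - inner ℝ g (y - x)‖ * ρ (x - y)) + ∫ y in Ωᶜ, ‖g‖ * ρ (x - y)) := by
  set M : Euc D → Euc D := fun w => (inner ℝ g w / ‖w‖ ^ 2 * ρ w) • w
  set F : Euc D → Euc D := fun y => ((u x - u y) / ‖x - y‖ ^ 2 * ρ (x - y)) • (x - y)
  have hM : Integrable fun y => M (x - y) :=
    (integrable_inner_div_norm_sq_mul_smul hρ hnn g).comp_sub_left x
  have hg : (D : ℝ) • ∫ y, M (x - y) = g := by
    rw [integral_sub_left_eq_self M]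
    exact natCast_smul_integral_inner_div_norm_sq_mul_smul hrad hρ hnn h1 g
  have hsplit : (∫ y in Ω, F y) - ∫ y, M (x - y)
      = (∫ y in Ω, (F y - M (x - y))) - ∫ y in Ωᶜ, M (x - y) := by
    rw [← integral_add_compl hΩ hM, integral_sub hF hM.integrableOn]
    abel
  have hrem : ∀ y, ‖F y - M (x - y)‖
      = ‖y - x‖⁻¹ * ‖u y - u x - inner ℝ g (y - x)‖ * ρ (x - y) := fun y => by
    have : F y - M (x - y)
        = ((u x - u y - inner ℝ g (x - y)) / ‖x - y‖ ^ 2 * ρ (x - y)) • (x - y) := by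
      simp only [F, M, ← sub_smul, sub_div, sub_mul]
    have hnum : |u x - u y - inner ℝ g (x - y)| = ‖u y - u x - inner ℝ g (y - x)‖ := by
      rw [Real.norm_eq_abs, ← abs_neg, ← neg_sub y x, inner_neg_right]
      congr 1
      ring
    rw [this, norm_div_norm_sq_mul_smul _ (hnn _), hnum, norm_sub_rev x y, div_eq_inv_mul]
  have hMc : ∫ y in Ωᶜ, ‖M (x - y)‖ ≤ ∫ y in Ωᶜ, ‖g‖ * ρ (x - y) :=
    setIntegral_mono_on hM.norm.integrableOn ((hρ.comp_sub_left x).const_mul _).integrableOn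
      hΩ.compl fun y _ => norm_inner_div_norm_sq_mul_smul_le g _ (hnn _)
  calc ‖nlGrad D Ω ρ u x - g‖ = D * ‖(∫ y in Ω, F y) - ∫ y, M (x - y)‖ := by
        rw [nlGrad, ← hg, ← smul_sub, norm_smul, Real.norm_natCast]
    _ ≤ D * ((∫ y in Ω, ‖F y - M (x - y)‖) + ∫ y in Ωᶜ, ‖M (x - y)‖) := by
        rw [hsplit]
        gcongr
        exact (norm_sub_le _ _).trans
          (add_le_add (norm_integral_le_integral_norm _) (norm_integral_le_integral_norm _))
    _ ≤ _ := by
        simp only [hrem]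
        gcongr

theorem tendsto_nlGrad_s8 {ρ : ℕ → Euc D → ℝ} (hρ : IsKernelSeq D ρ) (hΩ : IsOpen Ω) (hx : x ∈ Ω)
    (hu : ContinuousOn u Ω) {C : ℝ} (hC : ∀ y ∈ Ω, ‖u y‖ ≤ C) {g : Euc D}
    (hg : HasGradientAt u g x) :
    Tendsto (fun n => nlGrad D Ω (ρ n) u x) atTop (𝓝 g) := by
  obtain ⟨L, hL0, hL⟩ := hg.differentiableAt.exists_norm_sub_le_mul_norm_sub hC
  set φ : Euc D → ℝ := fun y => ‖y - x‖⁻¹ * ‖u y - u x - inner ℝ g (y - x)‖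
  have hφ : Tendsto φ (𝓝[Ω] x) (𝓝 0) := by
    simpa [φ] using (hasFDerivAt_iff_tendsto.1 hg.hasFDerivAt).mono_left nhdsWithin_le_nhds
  have hφB : ∀ y ∈ Ω, φ y ≤ L + ‖g‖ := fun y hy => by
    rcases eq_or_ne y x with rfl | hyx
    · simpa [φ] using add_nonneg hL0 (norm_nonneg g)
    have hpos : 0 < ‖y - x‖ := norm_pos_iff.2 (sub_ne_zero.2 hyx)
    calc φ y ≤ ‖y - x‖⁻¹ * (L * ‖y - x‖ + ‖g‖ * ‖y - x‖) := by
          dsimp only [φ]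
          gcongr
          exact (norm_sub_le _ _).trans (add_le_add (hL y hy) (by
            simpa using abs_real_inner_le_norm g (y - x)))
      _ = L + ‖g‖ := by field_simp
  -- vacuous: `𝓝[Ωᶜ] x = ⊥` because `Ω` is a neighbourhood of `x`
  have hcompl : Tendsto (fun _ => ‖g‖) (𝓝[Ωᶜ] x) (𝓝 0) := by
    rw [notMem_closure_iff_nhdsWithin_eq_bot.1 (by simpa [closure_compl, hΩ.interior_eq] using hx)]
    exact tendsto_bot
  rw [tendsto_iff_norm_sub_tendsto_zero]
  refine squeeze_zero (fun n => norm_nonneg _) (fun n => norm_nlGrad_sub_le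
    (hρ.radial n) (hρ.integrable_s8 n) (hρ.nonneg n) (hρ.integral_one n) hΩ.measurableSet
    (integrableOn_nlGrad_integrand (hρ.integrable_s8 n) (hρ.nonneg n) hΩ.measurableSet hu hL0 hL) g) ?_
  simpa only [add_zero, mul_zero] using ((tendsto_setIntegral_mul_comp_sub hρ hΩ.measurableSet
    (fun y _ => by positivity) hφB hφ).add (tendsto_setIntegral_mul_comp_sub hρ
    hΩ.measurableSet.compl (fun _ _ => norm_nonneg g) (fun _ _ => le_rfl) hcompl)).const_mul
    (D : ℝ)

end NonlocalGradient

theorem nlGrad_eps_subgradient_general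
    (D : ℕ) (Ω : Set (Euc D)) (hΩ : NiceDomain D Ω)
    (ρ : ℕ → Euc D → ℝ) (hρ : IsKernelSeq D ρ)
    (u : Euc D → ℝ) (hu : ContDiffOn ℝ 1 u (closure Ω))
    (hconv : ConvexOn ℝ Ω u)
    (x : Euc D) (hx : x ∈ Ω) :
    ∀ ε : ℝ, 0 < ε → ∃ N : ℕ, ∀ n > N, ∀ y ∈ Ω,
      u y - u x ≥ inner ℝ (y - x) (nlGrad D Ω (ρ n) u x) - ε := by
  intro ε hε
  have hg : HasGradientAt u (gradient u x) x :=
    ((hu.contDiffAt (mem_of_superset (hΩ.isOpen.mem_nhds hx) subset_closure)).differentiableAt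
      one_ne_zero).hasGradientAt
  obtain ⟨C, hC⟩ := hΩ.bounded.isCompact_closure.exists_bound_of_continuousOn hu.continuousOn
  obtain ⟨R, hR⟩ := hΩ.bounded.subset_closedBall x
  have hlim := tendsto_iff_norm_sub_tendsto_zero.1 <| tendsto_nlGrad_s8 hρ hΩ.isOpen hx
    (hu.continuousOn.mono subset_closure) (fun y hy => hC y (subset_closure hy)) hg
  obtain ⟨N, hN⟩ := eventually_atTop.1 <| (hlim.const_mul R).eventually
    (gt_mem_nhds (by rwa [mul_zero]))
  refine ⟨N, fun n hn y hy => ?_⟩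
  have hsubgrad : inner ℝ (gradient u x) (y - x) ≤ u y - u x := by
    simpa using hconv.le_sub_of_hasFDerivAt hx hy hg.hasFDerivAt
  have hyx : ‖y - x‖ ≤ R := by simpa [dist_eq_norm] using hR hy
  calc inner ℝ (y - x) (nlGrad D Ω (ρ n) u x) - ε
      = inner ℝ (gradient u x) (y - x)
        + inner ℝ (y - x) (nlGrad D Ω (ρ n) u x - gradient u x) - ε := by
        rw [inner_sub_right (y - x), real_inner_comm (y - x) (gradient u x)]; ring
    _ ≤ (u y - u x) + R * ‖nlGrad D Ω (ρ n) u x - gradient u x‖ - ε := by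
        gcongr
        exact (real_inner_le_norm _ _).trans (by gcongr)
    _ ≤ u y - u x := by linarith [hN n hn.le]

/-- for convex `u ∈ C¹(Ω̄)` and `x ∈ Ω`, for every `ε > 0` the nonlocal gradient
`∇_n u(x)` is an `ε`-subgradient of `u` at `x` for all sufficiently large `n`:
`u(y) − u(x) ≥ ⟨y − x, ∇_n u(x)⟩ − ε` for all `y ∈ Ω`. -/
theorem nlGrad_eps_subgradient
    (D : ℕ) (hD : 0 < D) (Ω : Set (Euc D)) (hΩ : NiceDomain D Ω)
    (ρ : ℕ → Euc D → ℝ) (hρ : IsKernelSeq D ρ)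
    (u : Euc D → ℝ) (hu : ContDiffOn ℝ 1 u (closure Ω))
    (hconv : ConvexOn ℝ Ω u)
    (x : Euc D) (hx : x ∈ Ω) :
    ∀ ε : ℝ, 0 < ε → ∃ N : ℕ, ∀ n > N, ∀ y ∈ Ω,
      u y - u x ≥ inner ℝ (y - x) (nlGrad D Ω (ρ n) u x) - ε :=
  nlGrad_eps_subgradient_general D Ω hΩ ρ hρ u hu hconv x hx
end
end
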